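/- (Characterization of when BTR is optimal.) In a market with m_S sellers and m_B buyers, BTR achieves the optimal gains from trade if and only if the (m_S+1)-st highest value among all m_S + m_B agent values is attained by a buyer (with ties broken in favor of buyers). Moreover, when BTR is not optimal, the efficient trade size q is positive and BTR's gains from trade fall short of optimal by exactly b^(q) - x^(m_S+1), where b^(q) is the q-th highest buyer value and x^(m_S+1) is the (m_S+1)-st highest overall value. -/

import Mathlib

/-!
Trading is downward closed (sellers ascend, buyers descend), so the efficient pairs are the first
`q`, and `x^(m_S+1)` is pinned down by counting: it is the value `v` with at least `m_B` agent
values `≤ v` and at least `m_S + 1` values `≥ v`. If `q = 0`, or BTR keeps all `q` trades, the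
gains agree and counting gives `x^(m_S+1) = b^(q+1)`, a buyer value. Otherwise
`x^(m_S+1) = s^(q)`, BTR loses exactly the last pair `b^(q) - s^(q)`, and `s^(q)` is a buyer value
only if it equals `b^(q)`, because `b^(q+1) < s^(q) ≤ b^(q)` and no buyer value lies strictly
between `b^(q+1)` and `b^(q)`.
-/

/-- Optimal gains from trade: `Σ_j (b^(j) - s^(j))₊` over `j = 1,...,min(|s|,|b|)` with `b^(j)`
the `j`-th highest buyer value and `s^(j)` the `j`-th lowest seller value. -/
noncomputable def optGFT (s b : Multiset ℝ) : ℝ :=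
  ∑ j ∈ Finset.range (min (Multiset.card s) (Multiset.card b)),
    max ((b.sort (· ≤ ·)).getD (Multiset.card b - 1 - j) 0
          - (s.sort (· ≤ ·)).getD j 0) 0

/-- The efficient trade size: the number of pairs `(b^(j), s^(j))` with `b^(j) ≥ s^(j)` (ties
broken in favor of buyers). -/
noncomputable def tradeSize (s b : Multiset ℝ) : ℕ :=
  ((Finset.range (min (Multiset.card s) (Multiset.card b))).filter
    (fun j => (s.sort (· ≤ ·)).getD j 0
      ≤ (b.sort (· ≤ ·)).getD (Multiset.card b - 1 - j) 0)).card

/-- The gains from trade of the Buyer Trade Reduction mechanism: all `q` efficient pairs trade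
if `b^(q+1)` exists and `b^(q+1) ≥ s^(q)`; otherwise the last pair is reduced. -/
noncomputable def btrGFT (s b : Multiset ℝ) : ℝ :=
  if tradeSize s b < Multiset.card b ∧
      (s.sort (· ≤ ·)).getD (tradeSize s b - 1) 0
        ≤ (b.sort (· ≤ ·)).getD (Multiset.card b - 1 - tradeSize s b) 0 then
    ∑ j ∈ Finset.range (tradeSize s b),
      ((b.sort (· ≤ ·)).getD (Multiset.card b - 1 - j) 0 - (s.sort (· ≤ ·)).getD j 0)
  else
    ∑ j ∈ Finset.range (tradeSize s b - 1),
      ((b.sort (· ≤ ·)).getD (Multiset.card b - 1 - j) 0 - (s.sort (· ≤ ·)).getD j 0)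

namespace Multiset

variable {α : Type*} [LinearOrder α] (m : Multiset α) (d : α)

theorem getD_sort_le_getD_sort {i j : ℕ} (hij : i ≤ j) (hj : j < card m) :
    (m.sort (· ≤ ·)).getD i d ≤ (m.sort (· ≤ ·)).getD j d := by
  have hlen : (m.sort (· ≤ ·)).length = card m := length_sort _
  rw [List.getD_eq_getElem _ _ (by omega), List.getD_eq_getElem _ _ (by omega)]
  exact (pairwise_sort m _).sortedLE.getElem_le_getElem_of_le hij

theorem succ_le_card_filter_le {i : ℕ} (hi : i < card m) {v : α}
    (hv : (m.sort (· ≤ ·)).getD i d ≤ v) : i + 1 ≤ card (m.filter (· ≤ v)) := by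
  have hlen : (m.sort (· ≤ ·)).length = card m := length_sort _
  have htake :
      (((m.sort (· ≤ ·)).take (i + 1) : List α) : Multiset α) ≤ m.filter (· ≤ v) := by
    refine le_filter.2 ⟨?_, fun x hx => ?_⟩
    · conv_rhs => rw [← sort_eq m (· ≤ ·)]
      exact coe_le.2 (List.take_sublist _ _).subperm
    · obtain ⟨j, hj, rfl⟩ := List.mem_take_iff_getElem.1 (mem_coe.1 hx)
      rw [← List.getD_eq_getElem _ d]
      exact (getD_sort_le_getD_sort m d (by omega) hi).trans hv
  simpa [hlen, hi] using card_le_card htake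

theorem card_sub_le_card_filter_ge {i : ℕ} {v : α}
    (hv : v ≤ (m.sort (· ≤ ·)).getD i d) : card m - i ≤ card (m.filter (v ≤ ·)) := by
  have hlen : (m.sort (· ≤ ·)).length = card m := length_sort _
  have hdrop : (((m.sort (· ≤ ·)).drop i : List α) : Multiset α) ≤ m.filter (v ≤ ·) := by
    refine le_filter.2 ⟨?_, fun x hx => ?_⟩
    · conv_rhs => rw [← sort_eq m (· ≤ ·)]
      exact coe_le.2 (List.drop_sublist _ _).subperm
    · obtain ⟨j, hj, rfl⟩ := List.mem_drop_iff_getElem.1 (mem_coe.1 hx)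
      rw [← List.getD_eq_getElem _ d]
      exact hv.trans (getD_sort_le_getD_sort m d (by omega) (by omega))
  simpa [hlen] using card_le_card hdrop

theorem getD_sort_eq_of_card_filter {k : ℕ} (hk : k < card m) {v : α}
    (hle : k + 1 ≤ card (m.filter (· ≤ v))) (hge : card m - k ≤ card (m.filter (v ≤ ·))) :
    (m.sort (· ≤ ·)).getD k d = v := by
  set x := (m.sort (· ≤ ·)).getD k d
  have hsplit (p : α → Prop) [DecidablePred p] :
      card (m.filter p) + card (m.filter (¬p ·)) = card m := by
    rw [← card_add, filter_add_not]
  rcases lt_trichotomy x v with h | h | h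
  · have hx := succ_le_card_filter_le m d hk (le_refl x)
    have hgt : card (m.filter (v ≤ ·)) ≤ card (m.filter (¬· ≤ x)) :=
      card_le_card (monotone_filter_right m fun y hy => not_le.2 (h.trans_le hy))
    have := hsplit (· ≤ x)
    omega
  · exact h
  · have hx := card_sub_le_card_filter_ge m d (le_refl x)
    have hlt : card (m.filter (· ≤ v)) ≤ card (m.filter (¬x ≤ ·)) :=
      card_le_card (monotone_filter_right m fun y hy => not_le.2 (hy.trans_lt h))
    have := hsplit (x ≤ ·)
    omega

theorem getD_sort_add_eq_of_card_filter {s t : Multiset α} (ht : 0 < card t) {v : α}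
    (hle : card t ≤ card (s.filter (· ≤ v)) + card (t.filter (· ≤ v)))
    (hge : card s + 1 ≤ card (s.filter (v ≤ ·)) + card (t.filter (v ≤ ·))) :
    ((s + t).sort (· ≤ ·)).getD (card t - 1) d = v := by
  refine getD_sort_eq_of_card_filter (s + t) d (by rw [card_add]; omega) ?_ ?_ <;>
    simp only [filter_add, card_add] <;> omega

end Multiset

namespace Finset

theorem lt_card_filter_range_iff {p : ℕ → Prop} [DecidablePred p] {n : ℕ}
    (hp : ∀ ⦃i j⦄, i ≤ j → j < n → p j → p i) {j : ℕ} :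
    j < #{k ∈ range n | p k} ↔ j < n ∧ p j := by
  constructor
  · intro hj
    by_contra hpj
    have hsub : {k ∈ range n | p k} ⊆ range j := fun k hk => by
      rw [mem_filter, mem_range] at hk
      exact mem_range.2 (lt_of_not_ge fun hjk => hpj ⟨by omega, hp hjk hk.1 hk.2⟩)
    simpa using hj.trans_le (card_le_card hsub)
  · rintro ⟨hjn, hpj⟩
    have hsub : range (j + 1) ⊆ {k ∈ range n | p k} := fun k hk => by
      rw [mem_range] at hk
      exact mem_filter.2 ⟨mem_range.2 (by omega), hp (by omega) hjn hpj⟩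
    simpa using card_le_card hsub

end Finset

section Market

open Multiset

variable {s b : Multiset ℝ}

/-- `sellerVal s j` is `s^(j+1)` and `buyerVal b j` is `b^(j+1)`: indices start at `0`. -/
noncomputable def sellerVal (s : Multiset ℝ) (j : ℕ) : ℝ := (s.sort (· ≤ ·)).getD j 0

noncomputable def buyerVal (b : Multiset ℝ) (j : ℕ) : ℝ :=
  (b.sort (· ≤ ·)).getD (card b - 1 - j) 0

/-- BTR's test `b^(q+1) ≥ s^(q)`. For `q = 0` the index `q - 1` truncates to `0`. -/
def TradesAll (s b : Multiset ℝ) : Prop :=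
  tradeSize s b < card b ∧ sellerVal s (tradeSize s b - 1) ≤ buyerVal b (tradeSize s b)

theorem sellerVal_mono {i j : ℕ} (hij : i ≤ j) (hj : j < card s) :
    sellerVal s i ≤ sellerVal s j :=
  getD_sort_le_getD_sort s 0 hij hj

theorem buyerVal_anti {i j : ℕ} (hij : i ≤ j) (hi : i < card b) :
    buyerVal b j ≤ buyerVal b i :=
  getD_sort_le_getD_sort b 0 (by omega) (by omega)

theorem buyerVal_mem {j : ℕ} (hj : j < card b) : buyerVal b j ∈ b := by
  have hlen : (b.sort (· ≤ ·)).length = card b := length_sort _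
  rw [buyerVal, List.getD_eq_getElem _ _ (by omega)]
  exact (Multiset.mem_sort _).1 (List.getElem_mem _)

theorem buyerVal_le_or_le_buyerVal_succ {y : ℝ} (hy : y ∈ b) {j : ℕ} (hj : j < card b) :
    buyerVal b j ≤ y ∨ j + 1 < card b ∧ y ≤ buyerVal b (j + 1) := by
  have hlen : (b.sort (· ≤ ·)).length = card b := length_sort _
  obtain ⟨k, hk, rfl⟩ := List.mem_iff_getElem.1 ((Multiset.mem_sort (· ≤ ·)).2 hy)
  rw [← List.getD_eq_getElem _ 0]
  rcases le_or_gt (card b - 1 - j) k with hjk | hkj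
  · exact .inl (getD_sort_le_getD_sort b 0 hjk (by omega))
  · exact .inr ⟨by omega, getD_sort_le_getD_sort b 0 (by omega) (by omega)⟩

theorem lt_tradeSize_iff {j : ℕ} :
    j < tradeSize s b ↔ j < min (card s) (card b) ∧ sellerVal s j ≤ buyerVal b j :=
  Finset.lt_card_filter_range_iff fun _ _ hij hj hle =>
    (sellerVal_mono hij (by omega)).trans (hle.trans (buyerVal_anti hij (by omega)))

theorem tradeSize_le_min : tradeSize s b ≤ min (card s) (card b) :=
  (Finset.card_filter_le _ _).trans (Finset.card_range _).le

theorem optGFT_eq_sum_range_tradeSize :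
    optGFT s b = ∑ j ∈ Finset.range (tradeSize s b), (buyerVal b j - sellerVal s j) := by
  have hzero : ∀ j ∈ Finset.range (min (card s) (card b)),
      j ∉ Finset.range (tradeSize s b) → max (buyerVal b j - sellerVal s j) 0 = 0 := by
    intro j hj hjq
    rw [Finset.mem_range] at hj hjq
    have hlt : buyerVal b j < sellerVal s j :=
      lt_of_not_ge fun hle => hjq (lt_tradeSize_iff.2 ⟨hj, hle⟩)
    exact max_eq_right (by linarith)
  calc optGFT s b
        = ∑ j ∈ Finset.range (min (card s) (card b)), max (buyerVal b j - sellerVal s j) 0 :=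
          rfl
    _ = ∑ j ∈ Finset.range (tradeSize s b), max (buyerVal b j - sellerVal s j) 0 :=
        (Finset.sum_subset (Finset.range_subset_range.2 tradeSize_le_min) hzero).symm
    _ = _ := Finset.sum_congr rfl fun j hj =>
        max_eq_left (sub_nonneg.2 (lt_tradeSize_iff.1 (Finset.mem_range.1 hj)).2)

theorem btrGFT_of_tradesAll (h : TradesAll s b) :
    btrGFT s b = ∑ j ∈ Finset.range (tradeSize s b), (buyerVal b j - sellerVal s j) :=
  if_pos h

theorem btrGFT_of_not_tradesAll (h : ¬TradesAll s b) :
    btrGFT s b = ∑ j ∈ Finset.range (tradeSize s b - 1), (buyerVal b j - sellerVal s j) :=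
  if_neg h

theorem btrGFT_eq_optGFT (h : tradeSize s b = 0 ∨ TradesAll s b) : btrGFT s b = optGFT s b := by
  rw [optGFT_eq_sum_range_tradeSize]
  by_cases hall : TradesAll s b
  · exact btrGFT_of_tradesAll hall
  · rw [btrGFT_of_not_tradesAll hall, h.resolve_right hall]

theorem optGFT_eq_btrGFT_add (hq : 0 < tradeSize s b) (h : ¬TradesAll s b) :
    optGFT s b = btrGFT s b
      + (buyerVal b (tradeSize s b - 1) - sellerVal s (tradeSize s b - 1)) := by
  rw [optGFT_eq_sum_range_tradeSize, btrGFT_of_not_tradesAll h, ← Finset.sum_range_succ,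
    Nat.sub_add_cancel hq]

theorem getD_sort_add_eq_buyerVal_tradeSize (hb : 0 < card b)
    (h : tradeSize s b = 0 ∨ TradesAll s b) :
    ((s + b).sort (· ≤ ·)).getD (card b - 1) 0 = buyerVal b (tradeSize s b) := by
  set q := tradeSize s b
  have hqm : q ≤ min (card s) (card b) := tradeSize_le_min
  have hqb : q < card b := h.elim (fun h0 => h0 ▸ hb) And.left
  refine getD_sort_add_eq_of_card_filter (0 : ℝ) hb ?_ ?_
  · have hbuyers := succ_le_card_filter_le b 0 (i := card b - 1 - q) (by omega)
      (le_refl (buyerVal b q))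
    have hsellers : q ≤ card (s.filter (· ≤ buyerVal b q)) := by
      rcases Nat.eq_zero_or_pos q with h0 | hpos
      · omega
      · have hlast : sellerVal s (q - 1) ≤ buyerVal b q := (h.resolve_left hpos.ne').2
        have := succ_le_card_filter_le s 0 (i := q - 1) (by omega) hlast
        omega
    omega
  · have hbuyers :=
      card_sub_le_card_filter_ge b 0 (i := card b - 1 - q) (le_refl (buyerVal b q))
    have hsellers : card s - q ≤ card (s.filter (buyerVal b q ≤ ·)) := by
      rcases lt_or_ge q (card s) with hqs | hqs
      · have hlt : buyerVal b q < sellerVal s q :=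
          lt_of_not_ge fun hle => (lt_tradeSize_iff.2 ⟨by omega, hle⟩).false
        exact card_sub_le_card_filter_ge s 0 hlt.le
      · omega
    omega

theorem getD_sort_add_eq_sellerVal (hq : 0 < tradeSize s b) (h : ¬TradesAll s b) :
    ((s + b).sort (· ≤ ·)).getD (card b - 1) 0 = sellerVal s (tradeSize s b - 1) := by
  set q := tradeSize s b
  have hqm : q ≤ min (card s) (card b) := tradeSize_le_min
  have htrade : sellerVal s (q - 1) ≤ buyerVal b (q - 1) :=
    (lt_tradeSize_iff.1 (Nat.sub_lt hq one_pos)).2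
  refine getD_sort_add_eq_of_card_filter (0 : ℝ) (by omega) ?_ ?_
  · have hsellers := succ_le_card_filter_le s 0 (i := q - 1) (by omega)
      (le_refl (sellerVal s (q - 1)))
    have hbuyers : card b - q ≤ card (b.filter (· ≤ sellerVal s (q - 1))) := by
      rcases lt_or_ge q (card b) with hqb | hqb
      · have hlt : buyerVal b q < sellerVal s (q - 1) := lt_of_not_ge fun hle => h ⟨hqb, hle⟩
        have := succ_le_card_filter_le b 0 (i := card b - 1 - q) (by omega) hlt.le
        omega
      · omega
    omega
  · have hsellers :=
      card_sub_le_card_filter_ge s 0 (i := q - 1) (le_refl (sellerVal s (q - 1)))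
    have hbuyers := card_sub_le_card_filter_ge b 0 (i := card b - 1 - (q - 1)) htrade
    omega

theorem sellerVal_mem_iff_eq_buyerVal (hq : 0 < tradeSize s b) (h : ¬TradesAll s b) :
    sellerVal s (tradeSize s b - 1) ∈ b ↔
      buyerVal b (tradeSize s b - 1) = sellerVal s (tradeSize s b - 1) := by
  set q := tradeSize s b
  have hqm : q ≤ min (card s) (card b) := tradeSize_le_min
  refine ⟨fun hmem => ?_, fun heq => heq ▸ buyerVal_mem (by omega)⟩
  have htrade : sellerVal s (q - 1) ≤ buyerVal b (q - 1) :=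
    (lt_tradeSize_iff.1 (Nat.sub_lt hq one_pos)).2
  rcases buyerVal_le_or_le_buyerVal_succ hmem (j := q - 1) (by omega) with hle | ⟨hqb, hle⟩
  · exact le_antisymm hle htrade
  · rw [Nat.sub_add_cancel hq] at hqb hle
    exact absurd ⟨hqb, hle⟩ h

end Market

/-- Characterization of when BTR is optimal (Lemma `reduce`): in a market with `m_S` sellers
and `m_B ≥ 1` buyers, BTR achieves the optimal GFT iff the `(m_S+1)`-st highest value
`x^(m_S+1)` among all agents is attained by a buyer (as a value, i.e. some buyer's value equals
it); moreover, when BTR is not optimal, the efficient trade size `q` is positive and BTR falls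
short of the optimum by exactly `b^(q) - x^(m_S+1)`.  Here the `(m_S+1)`-st highest value of
the combined multiset `s + b` (of size `m_S + m_B`) sits at ascending position `m_B - 1`. -/
theorem btr_optimal_iff_buyer_at_mS_plus_one (s b : Multiset ℝ) (hb : 0 < Multiset.card b) :
    (btrGFT s b = optGFT s b
      ↔ ((s + b).sort (· ≤ ·)).getD (Multiset.card b - 1) 0 ∈ b)
    ∧ (btrGFT s b ≠ optGFT s b →
        0 < tradeSize s b ∧
        optGFT s b = btrGFT s b
          + ((b.sort (· ≤ ·)).getD (Multiset.card b - tradeSize s b) 0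
              - ((s + b).sort (· ≤ ·)).getD (Multiset.card b - 1) 0)) := by
  by_cases hfull : tradeSize s b = 0 ∨ TradesAll s b
  · have heq := btrGFT_eq_optGFT hfull
    refine ⟨iff_of_true heq ?_, fun hne => absurd heq hne⟩
    rw [getD_sort_add_eq_buyerVal_tradeSize hb hfull]
    exact buyerVal_mem (hfull.elim (fun h0 => h0 ▸ hb) And.left)
  obtain ⟨hq, hall⟩ : 0 < tradeSize s b ∧ ¬TradesAll s b := by
    rw [not_or] at hfull
    exact ⟨Nat.pos_of_ne_zero hfull.1, hfull.2⟩
  have hidx : (b.sort (· ≤ ·)).getD (Multiset.card b - tradeSize s b) 0 =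
      buyerVal b (tradeSize s b - 1) := by
    have hqb : tradeSize s b ≤ Multiset.card b := tradeSize_le_min.trans (min_le_right _ _)
    rw [buyerVal]
    congr 1
    omega
  rw [getD_sort_add_eq_sellerVal hq hall, hidx, sellerVal_mem_iff_eq_buyerVal hq hall,
    optGFT_eq_btrGFT_add hq hall]
  exact ⟨⟨fun h => by linarith, fun h => by linarith⟩, fun _ => ⟨hq, rfl⟩⟩
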